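/- arXiv:2604.21167 — 7 statements merged into one kernel-verified Lean document; each statement's English description precedes it below -/
import Mathlib

section
/- Let A be a (possibly non-associative) algebra over a commutative ring K, and let π : G → End(A) be a partial representation of G by algebra endomorphisms such that the image of each π(g) is a two-sided ideal of A. Then for all a, b ∈ A and g, h ∈ G: π(g)(a)·π(h)(b) = π(g)(a · π(g⁻¹h)(b)). -/
/-!
Since `π g ∘ π g⁻¹ ∘ π g = π (g g⁻¹) ∘ π g = π g`, the map `π g ∘ π g⁻¹` fixes the image of `π g`.
The ideal property puts `π g a * π h b` in that image, so it equals
`π g (π g⁻¹ (π g a * π h b))`; expanding with multiplicativity twice and using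
`π g ∘ π g⁻¹ ∘ π h = π g ∘ π (g⁻¹ h)` gives `π g (a * π (g⁻¹ h) b)`.
-/

namespace PartialRepresentation

variable {G A : Type*} [Group G] (π : G → A → A)

theorem apply_inv_apply_of_mem_range (h1 : ∀ a, π 1 a = a)
    (h3 : ∀ g h a, π g (π h (π h⁻¹ a)) = π (g * h) (π h⁻¹ a))
    {g : G} {x : A} (hx : x ∈ Set.range (π g)) : π g (π g⁻¹ x) = x := by
  obtain ⟨c, rfl⟩ := hx
  simpa [h1] using h3 g g⁻¹ c

theorem apply_inv_apply_apply (h2 : ∀ g h a, π g⁻¹ (π g (π h a)) = π g⁻¹ (π (g * h) a))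
    (g h : G) (b : A) : π g (π g⁻¹ (π h b)) = π g (π (g⁻¹ * h) b) := by
  simpa using h2 g⁻¹ h b

theorem mul_apply_eq_apply_mul_of_mem_range [Mul A]
    (hmul : ∀ g a b, π g (a * b) = π g a * π g b) (h1 : ∀ a, π 1 a = a)
    (h2 : ∀ g h a, π g⁻¹ (π g (π h a)) = π g⁻¹ (π (g * h) a))
    (h3 : ∀ g h a, π g (π h (π h⁻¹ a)) = π (g * h) (π h⁻¹ a))
    {g h : G} {a b : A} (hmem : π g a * π h b ∈ Set.range (π g)) :
    π g a * π h b = π g (a * π (g⁻¹ * h) b) :=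
  calc π g a * π h b = π g (π g⁻¹ (π g a * π h b)) :=
        (apply_inv_apply_of_mem_range π h1 h3 hmem).symm
    _ = π g (π g⁻¹ (π g a)) * π g (π g⁻¹ (π h b)) := by rw [hmul, hmul]
    _ = π g a * π g (π (g⁻¹ * h) b) := by
        rw [apply_inv_apply_of_mem_range π h1 h3 ⟨a, rfl⟩, apply_inv_apply_apply π h2]
    _ = π g (a * π (g⁻¹ * h) b) := (hmul _ _ _).symm

end PartialRepresentation

/-- For an ideal partial representation `π` of `G` by endomorphisms of a
(possibly non-associative) `K`-algebra `A`:
`π g a * π h b = π g (a * π (g⁻¹ h) b)`. -/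
theorem stmt6 {K G A : Type*} [CommRing K] [Group G]
    [NonUnitalNonAssocRing A] [Module K A]
    (π : G → A →ₗ[K] A)
    (hmul : ∀ (g : G) (a b : A), π g (a * b) = π g a * π g b)
    (h1 : ∀ a : A, π 1 a = a)
    (h2 : ∀ (g h : G) (a : A), π g⁻¹ (π g (π h a)) = π g⁻¹ (π (g * h) a))
    (h3 : ∀ (g h : G) (a : A), π g (π h (π h⁻¹ a)) = π (g * h) (π h⁻¹ a))
    (hideal : ∀ (g : G) (a b : A),
      a * π g b ∈ LinearMap.range (π g) ∧ π g b * a ∈ LinearMap.range (π g)) :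
    ∀ (g h : G) (a b : A), π g a * π h b = π g (a * π (g⁻¹ * h) b) := by
  intro g h a b
  obtain ⟨c, hc⟩ := (hideal g (π h b) a).2
  exact PartialRepresentation.mul_apply_eq_apply_mul_of_mem_range (fun g => π g)
    hmul h1 h2 h3 ⟨c, hc⟩
end

section
/- Let A be a unital associative K-algebra and α a unital partial action of G on A, with 1_g denoting the (central idempotent) unit of the ideal A_g. Then the map π : G → End₀(A) defined by π(g)(a) := α_g(1_{g⁻¹}·a) is an ideal partial representation of G on A; i.e. each π(g) is an algebra endomorphism with image the ideal A_g, π(1) = id, π(g⁻¹)π(g)π(h) = π(g⁻¹)π(gh), and π(g)π(h)π(h⁻¹) = π(gh)π(h⁻¹). -/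
/-!
Since `α_g` is an isomorphism `A_{g⁻¹} ∩ A_{g⁻¹h} ≅ A_g ∩ A_h`, it sends the unit `1_{g⁻¹} 1_{g⁻¹h}`
to `1_g 1_h`; by multiplicativity of `π g` this gives `1_h · π g a = π g (1_{g⁻¹h} a)`. Together with
`α_g α_h = α_{gh}` this yields `π g ∘ π h = π (gh) ∘ (1_{h⁻¹} ·)`, from which both partial
representation identities follow.
-/

/-- `e g` is the unit `1_g` of `A_g`, and `a ∈ A_g` is encoded as `e g * a = a`. -/
structure IsUnitalPartialAction {G A : Type*} [Group G] [Ring A] (e : G → A) (α : G → A → A) :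
    Prop where
  isIdempotentElem : ∀ g, IsIdempotentElem (e g)
  commute : ∀ g a, Commute (e g) a
  one : e 1 = 1
  mapsTo : ∀ g a, e g⁻¹ * a = a → e g * α g a = α g a
  map_add : ∀ g a b, e g⁻¹ * a = a → e g⁻¹ * b = b → α g (a + b) = α g a + α g b
  map_mul : ∀ g a b, e g⁻¹ * a = a → e g⁻¹ * b = b → α g (a * b) = α g a * α g b
  one_apply : ∀ a, α 1 a = a
  inv_apply_apply : ∀ g a, e g⁻¹ * a = a → α g⁻¹ (α g a) = a
  mapsTo_inter : ∀ g h a, e g⁻¹ * a = a → e (g⁻¹ * h) * a = a → e h * α g a = α g a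
  apply_apply : ∀ g h a, e h⁻¹ * a = a → e (h⁻¹ * g⁻¹) * a = a → α g (α h a) = α (g * h) a

def partialRep {G A : Type*} [Group G] [Mul A] (e : G → A) (α : G → A → A) (g : G) (a : A) : A :=
  α g (e g⁻¹ * a)

namespace IsUnitalPartialAction

variable {G A : Type*} [Group G] [Ring A] {e : G → A} {α : G → A → A}

theorem mul_mul_self (hα : IsUnitalPartialAction e α) (g : G) (a : A) :
    e g * (e g * a) = e g * a := by
  rw [← mul_assoc, (hα.isIdempotentElem g).eq]

theorem mul_left_comm (hα : IsUnitalPartialAction e α) (g h : G) (a : A) :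
    e g * (e h * a) = e h * (e g * a) := by
  rw [← mul_assoc, (hα.commute g (e h)).eq, mul_assoc]

theorem partialRep_mul (hα : IsUnitalPartialAction e α) (g : G) (a b : A) :
    partialRep e α g (a * b) = partialRep e α g a * partialRep e α g b := by
  have h : e g⁻¹ * a * (e g⁻¹ * b) = e g⁻¹ * (a * b) := by
    rw [mul_assoc, ← mul_assoc a, ← (hα.commute _ a).eq, mul_assoc, hα.mul_mul_self, ← mul_assoc]
  rw [partialRep, partialRep, partialRep, ← h,
    hα.map_mul g _ _ (hα.mul_mul_self _ _) (hα.mul_mul_self _ _)]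

theorem partialRep_add (hα : IsUnitalPartialAction e α) (g : G) (a b : A) :
    partialRep e α g (a + b) = partialRep e α g a + partialRep e α g b := by
  rw [partialRep, mul_add, hα.map_add g _ _ (hα.mul_mul_self _ _) (hα.mul_mul_self _ _)]
  rfl

theorem partialRep_smul {K : Type*} [CommRing K] [Algebra K A] (hα : IsUnitalPartialAction e α)
    (hsmul : ∀ (g : G) (k : K) (a : A), e g⁻¹ * a = a → α g (k • a) = k • α g a)
    (g : G) (k : K) (a : A) : partialRep e α g (k • a) = k • partialRep e α g a := by
  rw [partialRep, mul_smul_comm, hsmul g k _ (hα.mul_mul_self _ _)]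
  rfl

theorem partialRep_one (hα : IsUnitalPartialAction e α) (a : A) : partialRep e α 1 a = a := by
  rw [partialRep, hα.one_apply, inv_one, hα.one, one_mul]

theorem mul_partialRep_self (hα : IsUnitalPartialAction e α) (g : G) (a : A) :
    e g * partialRep e α g a = partialRep e α g a :=
  hα.mapsTo g _ (hα.mul_mul_self _ _)

theorem mul_partialRep_of_mul_eq (hα : IsUnitalPartialAction e α) {g h : G} {a : A}
    (ha : e (g⁻¹ * h) * a = a) : e h * partialRep e α g a = partialRep e α g a :=
  hα.mapsTo_inter g h _ (hα.mul_mul_self _ _) (by rw [hα.mul_left_comm, ha])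

theorem partialRep_inv_partialRep (hα : IsUnitalPartialAction e α) (g : G) (a : A) :
    partialRep e α g⁻¹ (partialRep e α g a) = e g⁻¹ * a := by
  rw [partialRep, inv_inv, hα.mul_partialRep_self, partialRep,
    hα.inv_apply_apply g _ (hα.mul_mul_self _ _)]

theorem range_partialRep (hα : IsUnitalPartialAction e α) (g : G) :
    Set.range (partialRep e α g) = {a : A | e g * a = a} := by
  ext x
  constructor
  · rintro ⟨a, rfl⟩
    exact hα.mul_partialRep_self g a
  · intro (hx : e g * x = x)
    refine ⟨partialRep e α g⁻¹ x, ?_⟩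
    simpa only [inv_inv, hx] using hα.partialRep_inv_partialRep g⁻¹ x

/-- `u` and `z` are both units of `A_g ∩ A_h`: `u` lies in it and `z = π g w` with `w ∈ A_{g⁻¹h}`. -/
theorem partialRep_unit (hα : IsUnitalPartialAction e α) (g h : G) :
    partialRep e α g (e (g⁻¹ * h)) = e g * e h := by
  set u := partialRep e α g (e (g⁻¹ * h))
  set z := e g * e h
  have hzu : z * u = u := by
    rw [mul_assoc, hα.mul_partialRep_of_mul_eq (hα.isIdempotentElem _).eq, hα.mul_partialRep_self]
  have hz : e h * z = z := by rw [hα.mul_left_comm, (hα.isIdempotentElem h).eq]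
  set w := partialRep e α g⁻¹ z
  have hzw : partialRep e α g w = z := by
    simpa only [inv_inv, z, hα.mul_mul_self] using hα.partialRep_inv_partialRep g⁻¹ z
  have hw : e (g⁻¹ * h) * w = w :=
    hα.mul_partialRep_of_mul_eq (by rwa [inv_inv, mul_inv_cancel_left])
  have huz : u * z = z := by rw [← hzw, ← hα.partialRep_mul, hw]
  calc u = z * u := hzu.symm
    _ = u * z := ((hα.commute g u).mul_left (hα.commute h u)).eq
    _ = z := huz

theorem mul_partialRep (hα : IsUnitalPartialAction e α) (g h : G) (a : A) :
    e h * partialRep e α g a = partialRep e α g (e (g⁻¹ * h) * a) := by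
  calc e h * partialRep e α g a = e h * (e g * partialRep e α g a) := by
        rw [hα.mul_partialRep_self]
    _ = e g * e h * partialRep e α g a := by rw [← mul_assoc, (hα.commute h (e g)).eq]
    _ = partialRep e α g (e (g⁻¹ * h) * a) := by rw [← hα.partialRep_unit, ← hα.partialRep_mul]

theorem partialRep_partialRep (hα : IsUnitalPartialAction e α) (g h : G) (a : A) :
    partialRep e α g (partialRep e α h a) = partialRep e α (g * h) (e h⁻¹ * a) := by
  set x := e h⁻¹ * (e (h⁻¹ * g⁻¹) * a)
  have hx : e (h⁻¹ * g⁻¹) * x = x := by rw [hα.mul_left_comm, hα.mul_mul_self]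
  calc partialRep e α g (partialRep e α h a) = α g (α h x) := by
        rw [partialRep, hα.mul_partialRep, partialRep]
    _ = α (g * h) x := hα.apply_apply g h x (hα.mul_mul_self _ _) hx
    _ = partialRep e α (g * h) (e h⁻¹ * a) := by
        rw [partialRep, mul_inv_rev, hα.mul_left_comm]

theorem partialRep_inv_partialRep_partialRep (hα : IsUnitalPartialAction e α) (g h : G) (a : A) :
    partialRep e α g⁻¹ (partialRep e α g (partialRep e α h a)) =
      partialRep e α g⁻¹ (partialRep e α (g * h) a) := by
  rw [hα.partialRep_inv_partialRep, hα.partialRep_partialRep, inv_mul_cancel_left,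
    hα.mul_partialRep, mul_inv_rev]

theorem partialRep_partialRep_partialRep_inv (hα : IsUnitalPartialAction e α) (g h : G) (a : A) :
    partialRep e α g (partialRep e α h (partialRep e α h⁻¹ a)) =
      partialRep e α (g * h) (partialRep e α h⁻¹ a) := by
  rw [hα.partialRep_partialRep, hα.mul_partialRep_self]

end IsUnitalPartialAction

/-- From a unital partial action `α` of `G` on a unital associative algebra `A`
(with ideals `A_g = e g * A` generated by central idempotents `e g`), the map
`π g a := α g (e g⁻¹ * a)` is an ideal partial representation of `G` on `A`. -/
theorem stmt9 {K G A : Type*} [CommRing K] [Group G] [Ring A] [Algebra K A]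
    (e : G → A) (α : G → A → A)
    (he_idem : ∀ g : G, e g * e g = e g)
    (he_central : ∀ (g : G) (a : A), e g * a = a * e g)
    (he_one : e 1 = 1)
    -- α_g maps A_{g⁻¹} = {a | e g⁻¹ * a = a} into A_g
    (hmaps : ∀ (g : G) (a : A), e g⁻¹ * a = a → e g * α g a = α g a)
    -- α_g is additive, K-linear and multiplicative on A_{g⁻¹}
    (hadd : ∀ (g : G) (a b : A), e g⁻¹ * a = a → e g⁻¹ * b = b →
      α g (a + b) = α g a + α g b)
    (hsmul : ∀ (g : G) (k : K) (a : A), e g⁻¹ * a = a → α g (k • a) = k • α g a)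
    (hmul : ∀ (g : G) (a b : A), e g⁻¹ * a = a → e g⁻¹ * b = b →
      α g (a * b) = α g a * α g b)
    -- α₁ = id
    (hone : ∀ a : A, α 1 a = a)
    -- α_{g⁻¹} is inverse to α_g
    (hinv : ∀ (g : G) (a : A), e g⁻¹ * a = a → α g⁻¹ (α g a) = a)
    -- α_g(A_{g⁻¹} ∩ A_{g⁻¹h}) ⊆ A_g ∩ A_h
    (hdom : ∀ (g h : G) (a : A), e g⁻¹ * a = a → e (g⁻¹ * h) * a = a →
      e h * α g a = α g a)
    -- α_g ∘ α_h = α_{gh} on A_{h⁻¹} ∩ A_{h⁻¹g⁻¹}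
    (hcomp : ∀ (g h : G) (a : A), e h⁻¹ * a = a → e (h⁻¹ * g⁻¹) * a = a →
      α g (α h a) = α (g * h) a) :
    letI π : G → A → A := fun g a => α g (e g⁻¹ * a)
    -- each π g is an algebra endomorphism of A
    (∀ (g : G) (a b : A), π g (a * b) = π g a * π g b) ∧
    (∀ (g : G) (a b : A), π g (a + b) = π g a + π g b) ∧
    (∀ (g : G) (k : K) (a : A), π g (k • a) = k • π g a) ∧
    -- the image of π g is the ideal A_g = e g * A
    (∀ g : G, Set.range (π g) = {a : A | e g * a = a}) ∧
    -- π is a partial representation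
    (∀ a : A, π 1 a = a) ∧
    (∀ (g h : G) (a : A), π g⁻¹ (π g (π h a)) = π g⁻¹ (π (g * h) a)) ∧
    (∀ (g h : G) (a : A), π g (π h (π h⁻¹ a)) = π (g * h) (π h⁻¹ a)) := by
  have hα : IsUnitalPartialAction e α :=
    ⟨he_idem, he_central, he_one, hmaps, hadd, hmul, hone, hinv, hdom, hcomp⟩
  exact ⟨hα.partialRep_mul, hα.partialRep_add, hα.partialRep_smul hsmul, hα.range_partialRep,
    hα.partialRep_one, hα.partialRep_inv_partialRep_partialRep,
    hα.partialRep_partialRep_partialRep_inv⟩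
end

section
/- Let π : G → End_K(M) be a partial representation of G on a K-module M, and α the induced partial action (M_g = Im π(g), α_g = π(g)|_{M_{g⁻¹}}). Let Λ(M) be the quotient of KG ⊗ M by the submodule generated by {g ⊗ α_h(m) − gh ⊗ m : g,h ∈ G, m ∈ M_{h⁻¹}}, with classes denoted ⌊g, m⌋. Then the map τ : Λ(M) → M determined by τ(⌊g, m⌋) = π(g)(m) is a well-defined K-linear map satisfying τ(⌊1, m⌋) = m for all m ∈ M. -/
open scoped TensorProduct

noncomputable section

/-- The relation submodule defining `Λ(M) = (KG ⊗ M)/⟨g ⊗ π_h(m) - gh ⊗ m⟩`. -/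
def lamRel (K G M : Type*) [CommRing K] [Group G] [AddCommGroup M] [Module K M]
    (π : G → M →ₗ[K] M) : Submodule K (MonoidAlgebra K G ⊗[K] M) :=
  Submodule.span K { x | ∃ (g h : G) (m : M), m ∈ LinearMap.range (π h⁻¹) ∧
    x = MonoidAlgebra.single g (1 : K) ⊗ₜ[K] (π h m)
      - MonoidAlgebra.single (g * h) (1 : K) ⊗ₜ[K] m }

/-- The class `⌊g, m⌋` of `g ⊗ m` in `Λ(M)`. -/
def floorQ {K G M : Type*} [CommRing K] [Group G] [AddCommGroup M] [Module K M]
    (π : G → M →ₗ[K] M) (g : G) (m : M) :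
    (MonoidAlgebra K G ⊗[K] M) ⧸ lamRel K G M π :=
  Submodule.Quotient.mk (MonoidAlgebra.single g (1 : K) ⊗ₜ[K] m)

/-- For a partial representation `π` of `G` on a `K`-module `M`, the map
`τ : Λ(M) → M` determined by `τ ⌊g, m⌋ = π g m` is a well-defined `K`-linear
map satisfying `τ ⌊1, m⌋ = m`. -/
theorem stmt10 {K G M : Type*} [CommRing K] [Group G] [AddCommGroup M] [Module K M]
    (π : G → M →ₗ[K] M)
    (h1 : ∀ m : M, π 1 m = m)
    (h2 : ∀ (g h : G) (m : M), π g⁻¹ (π g (π h m)) = π g⁻¹ (π (g * h) m))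
    (h3 : ∀ (g h : G) (m : M), π g (π h (π h⁻¹ m)) = π (g * h) (π h⁻¹ m)) :
    ∃ τ : ((MonoidAlgebra K G ⊗[K] M) ⧸ lamRel K G M π) →ₗ[K] M,
      (∀ (g : G) (m : M), τ (floorQ π g m) = π g m) ∧
      (∀ m : M, τ (floorQ π 1 m) = m) := by
  let F : MonoidAlgebra K G ⊗[K] M →ₗ[K] M :=
    TensorProduct.lift (Finsupp.linearCombination K π ∘ₗ (MonoidAlgebra.coeffLinearEquiv K).toLinearMap)
  have hF : ∀ (g : G) (m : M), F (MonoidAlgebra.single g (1 : K) ⊗ₜ[K] m) = π g m := by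
    intro g m
    simp [F, TensorProduct.lift.tmul, MonoidAlgebra.coeffLinearEquiv]
  have hle : lamRel K G M π ≤ LinearMap.ker F := by
    rw [lamRel, Submodule.span_le]
    rintro x ⟨g, h, m, ⟨m', rfl⟩, rfl⟩
    simp only [SetLike.mem_coe, LinearMap.mem_ker, map_sub, hF]
    rw [h3 g h m']
    exact sub_self _
  refine ⟨(lamRel K G M π).liftQ F hle, fun g m => ?_, fun m => ?_⟩
  · simpa [floorQ] using hF g m
  · simpa [floorQ, h1 m] using hF 1 m

end
end

section
/- Let λ : G → End₀(A) be an ideal partial representation on an algebra A and (π, M) a covariant representation of λ. Then for all g,h ∈ G, x ∈ A, m ∈ M: λ_g(x)·π_h(m) = π_g(x·π_{g⁻¹h}(m)). -/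
/-! Since `λ_g x` lies in the image of `λ_g`, it is fixed by `e_g = λ_g λ_{g⁻¹}`; by covariance
`ε_g = π_g π_{g⁻¹}` then fixes `λ_g(x)·n` for every `n`, and moves it to `λ_g(x)·ε_g(n)`.
With `n = π_h m` the partial representation law turns `ε_g π_h` into `π_g π_{g⁻¹h}`, and
covariance pulls `π_g` out. -/

section PartialRepresentation

variable {G α : Type*} [Group G] (f : G → α → α)

theorem partialRep_apply_inv_apply (h₂ : ∀ g h x, f g⁻¹ (f g (f h x)) = f g⁻¹ (f (g * h) x))
    (g h : G) (x : α) : f g (f g⁻¹ (f h x)) = f g (f (g⁻¹ * h) x) := by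
  simpa only [inv_inv] using h₂ g⁻¹ h x

theorem partialRep_apply_inv_apply_self (h₁ : ∀ x, f 1 x = x)
    (h₂ : ∀ g h x, f g⁻¹ (f g (f h x)) = f g⁻¹ (f (g * h) x)) (g : G) (x : α) :
    f g (f g⁻¹ (f g x)) = f g x := by
  rw [partialRep_apply_inv_apply f h₂, inv_mul_cancel, h₁]

end PartialRepresentation

theorem stmt16_general {K G A M : Type*} [CommRing K] [Group G]
    [NonUnitalRing A] [Module K A] [AddCommGroup M] [Module K M]
    (σ : A →ₗ[K] M →ₗ[K] M)
    (l : G → A →ₗ[K] A)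
    (hl1 : ∀ x : A, l 1 x = x)
    (hl2 : ∀ (g h : G) (x : A), l g⁻¹ (l g (l h x)) = l g⁻¹ (l (g * h) x))
    (π : G → M →ₗ[K] M)
    (hπ2 : ∀ (g h : G) (m : M), π g⁻¹ (π g (π h m)) = π g⁻¹ (π (g * h) m))
    -- covariance: π_g(x·m) = λ_g(x)·π_g(m)
    (hcov : ∀ (g : G) (x : A) (m : M), π g (σ x m) = σ (l g x) (π g m))
    -- ε_g(x·m) = e_g(x)·m = x·ε_g(m), with ε_g = π_g π_{g⁻¹}, e_g = λ_g λ_{g⁻¹}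
    (heps1 : ∀ (g : G) (x : A) (m : M),
      π g (π g⁻¹ (σ x m)) = σ (l g (l g⁻¹ x)) m)
    (heps2 : ∀ (g : G) (x : A) (m : M),
      π g (π g⁻¹ (σ x m)) = σ x (π g (π g⁻¹ m))) :
    ∀ (g h : G) (x : A) (m : M),
      σ (l g x) (π h m) = π g (σ x (π (g⁻¹ * h) m)) := by
  intro g h x m
  calc σ (l g x) (π h m)
      = σ (l g (l g⁻¹ (l g x))) (π h m) := by
        rw [partialRep_apply_inv_apply_self (fun g => l g) hl1 hl2]
    _ = σ (l g x) (π g (π g⁻¹ (π h m))) := by rw [← heps1, heps2]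
    _ = σ (l g x) (π g (π (g⁻¹ * h) m)) := by
        rw [partialRep_apply_inv_apply (fun g => π g) hπ2]
    _ = π g (σ x (π (g⁻¹ * h) m)) := (hcov g x _).symm

/-- For an ideal partial representation `l = λ` on an algebra `A` and a
covariant representation `(π, M)` of `λ` (where `σ x m` denotes the module
action `x·m`): `λ_g(x)·π_h(m) = π_g(x·π_{g⁻¹h}(m))`. -/
theorem stmt16 {K G A M : Type*} [CommRing K] [Group G]
    [NonUnitalRing A] [Module K A] [AddCommGroup M] [Module K M]
    (σ : A →ₗ[K] M →ₗ[K] M)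
    (hσ : ∀ (x y : A) (m : M), σ (x * y) m = σ x (σ y m))
    (l : G → A →ₗ[K] A)
    (hlmul : ∀ (g : G) (x y : A), l g (x * y) = l g x * l g y)
    (hl1 : ∀ x : A, l 1 x = x)
    (hl2 : ∀ (g h : G) (x : A), l g⁻¹ (l g (l h x)) = l g⁻¹ (l (g * h) x))
    (hl3 : ∀ (g h : G) (x : A), l g (l h (l h⁻¹ x)) = l (g * h) (l h⁻¹ x))
    (hlideal : ∀ (g : G) (x y : A),
      x * l g y ∈ LinearMap.range (l g) ∧ l g y * x ∈ LinearMap.range (l g))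
    (π : G → M →ₗ[K] M)
    (hπ1 : ∀ m : M, π 1 m = m)
    (hπ2 : ∀ (g h : G) (m : M), π g⁻¹ (π g (π h m)) = π g⁻¹ (π (g * h) m))
    (hπ3 : ∀ (g h : G) (m : M), π g (π h (π h⁻¹ m)) = π (g * h) (π h⁻¹ m))
    -- covariance: π_g(x·m) = λ_g(x)·π_g(m)
    (hcov : ∀ (g : G) (x : A) (m : M), π g (σ x m) = σ (l g x) (π g m))
    -- ε_g(x·m) = e_g(x)·m = x·ε_g(m), with ε_g = π_g π_{g⁻¹}, e_g = λ_g λ_{g⁻¹}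
    (heps1 : ∀ (g : G) (x : A) (m : M),
      π g (π g⁻¹ (σ x m)) = σ (l g (l g⁻¹ x)) m)
    (heps2 : ∀ (g : G) (x : A) (m : M),
      π g (π g⁻¹ (σ x m)) = σ x (π g (π g⁻¹ m))) :
    ∀ (g h : G) (x : A) (m : M),
      σ (l g x) (π h m) = π g (σ x (π (g⁻¹ * h) m)) :=
  stmt16_general σ l hl1 hl2 π hπ2 hcov heps1 heps2
end

section
/- Let λ : G → End₀(A) be an ideal partial representation and (π, M) a covariant representation of λ. Then: (a) for each g ∈ G, the image π_g(M) is an A-submodule of M (i.e. x·π_g(m) ∈ π_g(M) for all x ∈ A, m ∈ M); and (b) λ_g(A)·M ⊆ π_g(M), i.e. λ_g(x)·m ∈ π_g(M) for all x ∈ A, m ∈ M. -/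
/-! Since `π_g π_{g⁻¹} π_g = π_g` (and likewise for `λ`), the idempotent `ε_g = π_g π_{g⁻¹}` fixes
`π_g(M)` and `e_g = λ_g λ_{g⁻¹}` fixes `λ_g(A)`. The two covariance conditions on `ε_g` then give
`x·π_g(m) = ε_g(x·π_g(m))` and `λ_g(x)·m = ε_g(λ_g(x)·m)`, both of which lie in `π_g(M)`. -/

theorem apply_inv_apply_self_of_partial {G X : Type*} [Group G] (f : G → X → X)
    (h1 : ∀ x, f 1 x = x)
    (h3 : ∀ (g h : G) (x : X), f g (f h (f h⁻¹ x)) = f (g * h) (f h⁻¹ x))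
    (g : G) (x : X) : f g (f g⁻¹ (f g x)) = f g x := by
  simpa [h1] using h3 g g⁻¹ x

theorem stmt17_general {K G A M : Type*} [CommRing K] [Group G]
    [NonUnitalRing A] [Module K A] [AddCommGroup M] [Module K M]
    (σ : A →ₗ[K] M →ₗ[K] M)
    (l : G → A →ₗ[K] A)
    (hl1 : ∀ x : A, l 1 x = x)
    (hl3 : ∀ (g h : G) (x : A), l g (l h (l h⁻¹ x)) = l (g * h) (l h⁻¹ x))
    (π : G → M →ₗ[K] M)
    (hπ1 : ∀ m : M, π 1 m = m)
    (hπ3 : ∀ (g h : G) (m : M), π g (π h (π h⁻¹ m)) = π (g * h) (π h⁻¹ m))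
    -- ε_g(x·m) = e_g(x)·m = x·ε_g(m), with ε_g = π_g π_{g⁻¹}, e_g = λ_g λ_{g⁻¹}
    (heps1 : ∀ (g : G) (x : A) (m : M),
      π g (π g⁻¹ (σ x m)) = σ (l g (l g⁻¹ x)) m)
    (heps2 : ∀ (g : G) (x : A) (m : M),
      π g (π g⁻¹ (σ x m)) = σ x (π g (π g⁻¹ m))) :
    (∀ (g : G) (x : A) (m : M), σ x (π g m) ∈ LinearMap.range (π g)) ∧
    (∀ (g : G) (x : A) (m : M), σ (l g x) m ∈ LinearMap.range (π g)) := by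
  constructor
  · intro g x m
    refine ⟨π g⁻¹ (σ x (π g m)), ?_⟩
    rw [heps2, apply_inv_apply_self_of_partial (fun g => π g) hπ1 hπ3]
  · intro g x m
    refine ⟨π g⁻¹ (σ (l g x) m), ?_⟩
    rw [heps1, apply_inv_apply_self_of_partial (fun g => l g) hl1 hl3]

/-- For an ideal partial representation `l = λ` on an algebra `A` and a
covariant representation `(π, M)` of `λ`:
(a) each `π_g(M)` is an `A`-submodule of `M`, and
(b) `λ_g(A)·M ⊆ π_g(M)`. -/
theorem stmt17 {K G A M : Type*} [CommRing K] [Group G]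
    [NonUnitalRing A] [Module K A] [AddCommGroup M] [Module K M]
    (σ : A →ₗ[K] M →ₗ[K] M)
    (hσ : ∀ (x y : A) (m : M), σ (x * y) m = σ x (σ y m))
    (l : G → A →ₗ[K] A)
    (hlmul : ∀ (g : G) (x y : A), l g (x * y) = l g x * l g y)
    (hl1 : ∀ x : A, l 1 x = x)
    (hl2 : ∀ (g h : G) (x : A), l g⁻¹ (l g (l h x)) = l g⁻¹ (l (g * h) x))
    (hl3 : ∀ (g h : G) (x : A), l g (l h (l h⁻¹ x)) = l (g * h) (l h⁻¹ x))
    (hlideal : ∀ (g : G) (x y : A),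
      x * l g y ∈ LinearMap.range (l g) ∧ l g y * x ∈ LinearMap.range (l g))
    (π : G → M →ₗ[K] M)
    (hπ1 : ∀ m : M, π 1 m = m)
    (hπ2 : ∀ (g h : G) (m : M), π g⁻¹ (π g (π h m)) = π g⁻¹ (π (g * h) m))
    (hπ3 : ∀ (g h : G) (m : M), π g (π h (π h⁻¹ m)) = π (g * h) (π h⁻¹ m))
    -- covariance: π_g(x·m) = λ_g(x)·π_g(m)
    (hcov : ∀ (g : G) (x : A) (m : M), π g (σ x m) = σ (l g x) (π g m))
    -- ε_g(x·m) = e_g(x)·m = x·ε_g(m), with ε_g = π_g π_{g⁻¹}, e_g = λ_g λ_{g⁻¹}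
    (heps1 : ∀ (g : G) (x : A) (m : M),
      π g (π g⁻¹ (σ x m)) = σ (l g (l g⁻¹ x)) m)
    (heps2 : ∀ (g : G) (x : A) (m : M),
      π g (π g⁻¹ (σ x m)) = σ x (π g (π g⁻¹ m))) :
    (∀ (g : G) (x : A) (m : M), σ x (π g m) ∈ LinearMap.range (π g)) ∧
    (∀ (g : G) (x : A) (m : M), σ (l g x) m ∈ LinearMap.range (π g)) :=
  stmt17_general σ l hl1 hl3 π hπ1 hπ3 heps1 heps2
end

section
/- Let L and M be Lie algebras over K with L acting on M by derivations, and let λ : G → End₀(L), π : G → End₀(M) be ideal partial representations such that (π, M) is a covariant representation of λ (with respect to the derivation action). Then the map (λ×π) : G → End₀(L ⋉ M), g ↦ ((x,m) ↦ (λ_g(x), π_g(m))), is an ideal partial representation of G on the semidirect product Lie algebra L ⋉ M; in particular for each g, Im(λ×π)_g = Im λ_g × Im π_g is a Lie ideal of L ⋉ M. -/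
/-! The maps `(λ×π)_g` act componentwise, so the partial-representation laws and the
description of the image hold coordinatewise. Covariance `π_g (x·m) = λ_g(x)·π_g(m)` makes
`(λ×π)_g` preserve the semidirect bracket. For the ideal property, the only new terms are the
actions `x·π_g(n)` and `λ_g(x)·m`; the two identities for `ε_g = π_g π_{g⁻¹}` together with
`π_g ε_g = π_g` and `λ_g e_g = λ_g` exhibit both as elements of `Im π_g`. -/

section SemidirectBracket

variable {K L M L' M' : Type*} [CommRing K] [LieRing L] [LieAlgebra K L] [LieRing M]
  [LieAlgebra K M] [LieRing L'] [LieAlgebra K L'] [LieRing M'] [LieAlgebra K M']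

def semidirectBracket (d : L →ₗ[K] M →ₗ[K] M) (p q : L × M) : L × M :=
  (⁅p.1, q.1⁆, ⁅p.2, q.2⁆ + d p.1 q.2 - d q.1 p.2)

theorem semidirectBracket_swap (d : L →ₗ[K] M →ₗ[K] M) (p q : L × M) :
    semidirectBracket d q p = -semidirectBracket d p q := by
  ext
  · exact (lie_skew _ _).symm
  · simp only [semidirectBracket, Prod.snd_neg, ← lie_skew p.2 q.2]
    abel

theorem prodMap_semidirectBracket (d : L →ₗ[K] M →ₗ[K] M) (d' : L' →ₗ[K] M' →ₗ[K] M')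
    (f : L →ₗ[K] L') (φ : M →ₗ[K] M') (hf : ∀ x y, f ⁅x, y⁆ = ⁅f x, f y⁆)
    (hφ : ∀ m n, φ ⁅m, n⁆ = ⁅φ m, φ n⁆) (hcov : ∀ x m, φ (d x m) = d' (f x) (φ m))
    (p q : L × M) :
    f.prodMap φ (semidirectBracket d p q) =
      semidirectBracket d' (f.prodMap φ p) (f.prodMap φ q) := by
  simp only [semidirectBracket, LinearMap.prodMap_apply, hf, map_sub, map_add, hφ, hcov]

theorem semidirectBracket_mem_range_prodMap (d : L →ₗ[K] M →ₗ[K] M)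
    (f : L →ₗ[K] L) (φ : M →ₗ[K] M)
    (hf : ∀ x y : L, ⁅x, f y⁆ ∈ LinearMap.range f)
    (hφ : ∀ m n : M, ⁅m, φ n⁆ ∈ LinearMap.range φ)
    (hdφ : ∀ x n, d x (φ n) ∈ LinearMap.range φ) (hdf : ∀ x m, d (f x) m ∈ LinearMap.range φ)
    (p : L × M) {q : L × M} (hq : q ∈ LinearMap.range (f.prodMap φ)) :
    semidirectBracket d p q ∈ LinearMap.range (f.prodMap φ) := by
  obtain ⟨r, rfl⟩ := hq
  rw [LinearMap.range_prodMap]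
  exact ⟨hf p.1 r.1, sub_mem (add_mem (hφ p.2 r.2) (hdφ p.1 r.2)) (hdf r.1 p.2)⟩

end SemidirectBracket

theorem apply_inv_apply_self {G X : Type*} [Group G] (ρ : G → X → X)
    (h1 : ∀ x, ρ 1 x = x) (h3 : ∀ g h x, ρ g (ρ h (ρ h⁻¹ x)) = ρ (g * h) (ρ h⁻¹ x))
    (g : G) (x : X) : ρ g (ρ g⁻¹ (ρ g x)) = ρ g x := by
  simpa [h1] using h3 g g⁻¹ x

theorem stmt18_general {K G L M : Type*} [CommRing K] [Group G]
    [LieRing L] [LieAlgebra K L] [LieRing M] [LieAlgebra K M]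
    -- L acts on M by derivations
    (d : L →ₗ[K] M →ₗ[K] M)
    -- λ is an ideal partial representation on L
    (l : G → L →ₗ[K] L)
    (hllie : ∀ (g : G) (x y : L), l g ⁅x, y⁆ = ⁅l g x, l g y⁆)
    (hl1 : ∀ x : L, l 1 x = x)
    (hl2 : ∀ (g h : G) (x : L), l g⁻¹ (l g (l h x)) = l g⁻¹ (l (g * h) x))
    (hl3 : ∀ (g h : G) (x : L), l g (l h (l h⁻¹ x)) = l (g * h) (l h⁻¹ x))
    (hlideal : ∀ (g : G) (x y : L), ⁅x, l g y⁆ ∈ LinearMap.range (l g))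
    -- π is an ideal partial representation on M
    (π : G → M →ₗ[K] M)
    (hπlie : ∀ (g : G) (m n : M), π g ⁅m, n⁆ = ⁅π g m, π g n⁆)
    (hπ1 : ∀ m : M, π 1 m = m)
    (hπ2 : ∀ (g h : G) (m : M), π g⁻¹ (π g (π h m)) = π g⁻¹ (π (g * h) m))
    (hπ3 : ∀ (g h : G) (m : M), π g (π h (π h⁻¹ m)) = π (g * h) (π h⁻¹ m))
    (hπideal : ∀ (g : G) (m n : M), ⁅m, π g n⁆ ∈ LinearMap.range (π g))
    -- (π, M) is a covariant representation of λ
    (hcov : ∀ (g : G) (x : L) (m : M), π g (d x m) = d (l g x) (π g m))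
    (heps1 : ∀ (g : G) (x : L) (m : M),
      π g (π g⁻¹ (d x m)) = d (l g (l g⁻¹ x)) m)
    (heps2 : ∀ (g : G) (x : L) (m : M),
      π g (π g⁻¹ (d x m)) = d x (π g (π g⁻¹ m))) :
    -- the semidirect product bracket on L × M, and F = λ×π
    letI br : L × M → L × M → L × M :=
      fun p q => (⁅p.1, q.1⁆, ⁅p.2, q.2⁆ + d p.1 q.2 - d q.1 p.2)
    letI F : G → (L × M) →ₗ[K] (L × M) := fun g => (l g).prodMap (π g)
    -- each (λ×π)_g is a Lie algebra endomorphism of L ⋉ M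
    (∀ (g : G) (p q : L × M), F g (br p q) = br (F g p) (F g q)) ∧
    -- λ×π is a partial representation
    (∀ p : L × M, F 1 p = p) ∧
    (∀ (g h : G) (p : L × M), F g⁻¹ (F g (F h p)) = F g⁻¹ (F (g * h) p)) ∧
    (∀ (g h : G) (p : L × M), F g (F h (F h⁻¹ p)) = F (g * h) (F h⁻¹ p)) ∧
    -- the image of (λ×π)_g is Im λ_g × Im π_g
    (∀ g : G, Set.range (F g) = Set.range (l g) ×ˢ Set.range (π g)) ∧
    -- and it is a Lie ideal of L ⋉ M
    (∀ (g : G) (p q : L × M), q ∈ Set.range (F g) →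
      br p q ∈ Set.range (F g) ∧ br q p ∈ Set.range (F g)) := by
  have hdπ (g : G) (x : L) (n : M) : d x (π g n) ∈ LinearMap.range (π g) :=
    ⟨π g⁻¹ (d x (π g n)), by rw [heps2, apply_inv_apply_self (fun g => π g) hπ1 hπ3]⟩
  have hdl (g : G) (x : L) (m : M) : d (l g x) m ∈ LinearMap.range (π g) :=
    ⟨π g⁻¹ (d (l g x) m), by rw [heps1, apply_inv_apply_self (fun g => l g) hl1 hl3]⟩
  have hideal (g : G) (p : L × M) {q : L × M} (hq : q ∈ LinearMap.range ((l g).prodMap (π g))) :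
      semidirectBracket d p q ∈ LinearMap.range ((l g).prodMap (π g)) :=
    semidirectBracket_mem_range_prodMap d _ _ (hlideal g) (hπideal g) (hdπ g) (hdl g) p hq
  refine ⟨fun g => prodMap_semidirectBracket d d _ _ (hllie g) (hπlie g) (hcov g),
    fun p => Prod.ext (hl1 _) (hπ1 _), fun g h p => Prod.ext (hl2 ..) (hπ2 ..),
    fun g h p => Prod.ext (hl3 ..) (hπ3 ..),
    fun g => by rw [LinearMap.coe_prodMap, Set.range_prodMap], fun g p q hq => ?_⟩
  change q ∈ LinearMap.range ((l g).prodMap (π g)) at hq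
  change semidirectBracket d p q ∈ LinearMap.range ((l g).prodMap (π g)) ∧
    semidirectBracket d q p ∈ LinearMap.range ((l g).prodMap (π g))
  rw [semidirectBracket_swap d p q]
  exact ⟨hideal g p hq, neg_mem (hideal g p hq)⟩

/-- Let `L` act on the Lie algebra `M` by derivations (action `d`), and let
`l = λ` and `π` be ideal partial representations on `L` and `M` such that
`(π, M)` is a covariant representation of `λ`. Then
`(λ×π)_g = (λ_g, π_g)` is an ideal partial representation of `G` on the
semidirect product `L ⋉ M` (with bracket
`⁅(x,m),(y,n)⁆ = (⁅x,y⁆, ⁅m,n⁆ + x·n − y·m)`); in particular each image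
`Im λ_g × Im π_g` is a Lie ideal of `L ⋉ M`. -/
theorem stmt18 {K G L M : Type*} [CommRing K] [Group G]
    [LieRing L] [LieAlgebra K L] [LieRing M] [LieAlgebra K M]
    -- L acts on M by derivations
    (d : L →ₗ[K] M →ₗ[K] M)
    (hd1 : ∀ (x y : L) (m : M), d ⁅x, y⁆ m = d x (d y m) - d y (d x m))
    (hd2 : ∀ (x : L) (m n : M), d x ⁅m, n⁆ = ⁅d x m, n⁆ + ⁅m, d x n⁆)
    -- λ is an ideal partial representation on L
    (l : G → L →ₗ[K] L)
    (hllie : ∀ (g : G) (x y : L), l g ⁅x, y⁆ = ⁅l g x, l g y⁆)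
    (hl1 : ∀ x : L, l 1 x = x)
    (hl2 : ∀ (g h : G) (x : L), l g⁻¹ (l g (l h x)) = l g⁻¹ (l (g * h) x))
    (hl3 : ∀ (g h : G) (x : L), l g (l h (l h⁻¹ x)) = l (g * h) (l h⁻¹ x))
    (hlideal : ∀ (g : G) (x y : L), ⁅x, l g y⁆ ∈ LinearMap.range (l g))
    -- π is an ideal partial representation on M
    (π : G → M →ₗ[K] M)
    (hπlie : ∀ (g : G) (m n : M), π g ⁅m, n⁆ = ⁅π g m, π g n⁆)
    (hπ1 : ∀ m : M, π 1 m = m)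
    (hπ2 : ∀ (g h : G) (m : M), π g⁻¹ (π g (π h m)) = π g⁻¹ (π (g * h) m))
    (hπ3 : ∀ (g h : G) (m : M), π g (π h (π h⁻¹ m)) = π (g * h) (π h⁻¹ m))
    (hπideal : ∀ (g : G) (m n : M), ⁅m, π g n⁆ ∈ LinearMap.range (π g))
    -- (π, M) is a covariant representation of λ
    (hcov : ∀ (g : G) (x : L) (m : M), π g (d x m) = d (l g x) (π g m))
    (heps1 : ∀ (g : G) (x : L) (m : M),
      π g (π g⁻¹ (d x m)) = d (l g (l g⁻¹ x)) m)
    (heps2 : ∀ (g : G) (x : L) (m : M),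
      π g (π g⁻¹ (d x m)) = d x (π g (π g⁻¹ m))) :
    -- the semidirect product bracket on L × M, and F = λ×π
    letI br : L × M → L × M → L × M :=
      fun p q => (⁅p.1, q.1⁆, ⁅p.2, q.2⁆ + d p.1 q.2 - d q.1 p.2)
    letI F : G → (L × M) →ₗ[K] (L × M) := fun g => (l g).prodMap (π g)
    -- each (λ×π)_g is a Lie algebra endomorphism of L ⋉ M
    (∀ (g : G) (p q : L × M), F g (br p q) = br (F g p) (F g q)) ∧
    -- λ×π is a partial representation
    (∀ p : L × M, F 1 p = p) ∧
    (∀ (g h : G) (p : L × M), F g⁻¹ (F g (F h p)) = F g⁻¹ (F (g * h) p)) ∧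
    (∀ (g h : G) (p : L × M), F g (F h (F h⁻¹ p)) = F (g * h) (F h⁻¹ p)) ∧
    -- the image of (λ×π)_g is Im λ_g × Im π_g
    (∀ g : G, Set.range (F g) = Set.range (l g) ×ˢ Set.range (π g)) ∧
    -- and it is a Lie ideal of L ⋉ M
    (∀ (g : G) (p q : L × M), q ∈ Set.range (F g) →
      br p q ∈ Set.range (F g) ∧ br q p ∈ Set.range (F g)) :=
  stmt18_general d l hllie hl1 hl2 hl3 hlideal π hπlie hπ1 hπ2 hπ3 hπideal hcov heps1 heps2
end

section
/- Let λ : G → End₀(A) be an ideal partial representation on an associative or Lie algebra A, and (π, M) a covariant representation of λ. Let Λ(A) and Λ(M) be the Λ-constructions with actions ⌊g,x⌋·⌊h,m⌋ := ⌊g, x·π_{g⁻¹h}(m)⌋. Then the map T : Λ(M) → Λ(M) determined by T(⌊h, m⌋) = ⌊1, π_h(m)⌋ is a well-defined Λ(A)-module homomorphism satisfying T² = T. -/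
open scoped TensorProduct

noncomputable section

lemma floorQ_eq {K G M : Type*} [CommRing K] [Group G] [AddCommGroup M] [Module K M]
    (π : G → M →ₗ[K] M) (g h : G) (m : M) (hm : m ∈ LinearMap.range (π h⁻¹)) :
    floorQ π g (π h m) = floorQ π (g * h) m := by
  rw [floorQ, floorQ, Submodule.Quotient.eq]
  exact Submodule.subset_span ⟨g, h, m, hm, rfl⟩

lemma floorQ_span {K G M : Type*} [CommRing K] [Group G] [AddCommGroup M] [Module K M]
    (π : G → M →ₗ[K] M) (u : (MonoidAlgebra K G ⊗[K] M) ⧸ lamRel K G M π) :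
    u ∈ Submodule.span K {v | ∃ g m, v = floorQ π g m} := by
  obtain ⟨t, rfl⟩ := Submodule.Quotient.mk_surjective _ u
  induction t using TensorProduct.induction_on with
  | zero => simp
  | add x y hx hy => rw [Submodule.Quotient.mk_add]; exact add_mem hx hy
  | tmul f m =>
    induction f using MonoidAlgebra.induction_linear with
    | zero =>
      rw [show ((0 : MonoidAlgebra K G) ⊗ₜ[K] m) = 0 from TensorProduct.zero_tmul _ m]
      simp
    | add f g hf hg =>
      rw [TensorProduct.add_tmul, Submodule.Quotient.mk_add]; exact add_mem hf hg
    | single a b =>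
      have h1 : (MonoidAlgebra.single a b : MonoidAlgebra K G) ⊗ₜ[K] m
          = b • (MonoidAlgebra.single a (1 : K) ⊗ₜ[K] m) := by
        rw [TensorProduct.smul_tmul']
        congr 1
        rw [MonoidAlgebra.smul_single', mul_one]
      rw [h1, Submodule.Quotient.mk_smul]
      exact Submodule.smul_mem _ _ (Submodule.subset_span ⟨a, m, rfl⟩)

/-- For an ideal partial representation `l = λ` on an algebra `A` and a
covariant representation `(π, M)` of `λ`, the map `T : Λ(M) → Λ(M)` determined
by `T ⌊h, m⌋ = ⌊1, π_h(m)⌋` is a well-defined idempotent (`T² = T`)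
`Λ(A)`-module homomorphism, where `Λ(M)` is a `Λ(A)`-module via
`⌊g,x⌋ · ⌊h,m⌋ = ⌊g, x·π_{g⁻¹h}(m)⌋`. -/
theorem stmt19 {K G A M : Type*} [CommRing K] [Group G]
    [NonUnitalRing A] [Module K A] [AddCommGroup M] [Module K M]
    (σ : A →ₗ[K] M →ₗ[K] M)
    (hσ : ∀ (x y : A) (m : M), σ (x * y) m = σ x (σ y m))
    (l : G → A →ₗ[K] A)
    (hlmul : ∀ (g : G) (x y : A), l g (x * y) = l g x * l g y)
    (hl1 : ∀ x : A, l 1 x = x)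
    (hl2 : ∀ (g h : G) (x : A), l g⁻¹ (l g (l h x)) = l g⁻¹ (l (g * h) x))
    (hl3 : ∀ (g h : G) (x : A), l g (l h (l h⁻¹ x)) = l (g * h) (l h⁻¹ x))
    (hlideal : ∀ (g : G) (x y : A),
      x * l g y ∈ LinearMap.range (l g) ∧ l g y * x ∈ LinearMap.range (l g))
    (π : G → M →ₗ[K] M)
    (hπ1 : ∀ m : M, π 1 m = m)
    (hπ2 : ∀ (g h : G) (m : M), π g⁻¹ (π g (π h m)) = π g⁻¹ (π (g * h) m))
    (hπ3 : ∀ (g h : G) (m : M), π g (π h (π h⁻¹ m)) = π (g * h) (π h⁻¹ m))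
    (hcov : ∀ (g : G) (x : A) (m : M), π g (σ x m) = σ (l g x) (π g m))
    (heps1 : ∀ (g : G) (x : A) (m : M),
      π g (π g⁻¹ (σ x m)) = σ (l g (l g⁻¹ x)) m)
    (heps2 : ∀ (g : G) (x : A) (m : M),
      π g (π g⁻¹ (σ x m)) = σ x (π g (π g⁻¹ m))) :
    ∃ T : ((MonoidAlgebra K G ⊗[K] M) ⧸ lamRel K G M π) →ₗ[K]
        ((MonoidAlgebra K G ⊗[K] M) ⧸ lamRel K G M π),
      -- T is determined by T ⌊h, m⌋ = ⌊1, π_h(m)⌋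
      (∀ (h : G) (m : M), T (floorQ π h m) = floorQ π 1 (π h m)) ∧
      -- T is idempotent
      (∀ u, T (T u) = T u) ∧
      -- T is a Λ(A)-module homomorphism for the action
      -- ⌊g,x⌋ · ⌊h,m⌋ = ⌊g, x·π_{g⁻¹h}(m)⌋
      (∀ act : ((MonoidAlgebra K G ⊗[K] A) ⧸ lamRel K G A l) →ₗ[K]
          ((MonoidAlgebra K G ⊗[K] M) ⧸ lamRel K G M π) →ₗ[K]
          ((MonoidAlgebra K G ⊗[K] M) ⧸ lamRel K G M π),
        (∀ (g h : G) (x : A) (m : M),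
          act (floorQ l g x) (floorQ π h m) = floorQ π g (σ x (π (g⁻¹ * h) m))) →
        ∀ a u, T (act a u) = act a (T u)) := by
  classical
  set Q := (MonoidAlgebra K G ⊗[K] M) ⧸ lamRel K G M π with hQ
  -- elementary map M →ₗ Q : m ↦ ⌊1, π_g m⌋
  let L : G → M →ₗ[K] Q := fun g =>
    (lamRel K G M π).mkQ ∘ₗ
      (TensorProduct.mk K (MonoidAlgebra K G) M (MonoidAlgebra.single 1 1)) ∘ₗ π g
  let b : MonoidAlgebra K G →ₗ[K] M →ₗ[K] Q :=
    (Finsupp.lsum K fun g => LinearMap.toSpanSingleton K (M →ₗ[K] Q) (L g)) ∘ₗ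
      (MonoidAlgebra.coeffLinearEquiv K).toLinearMap
  let F : MonoidAlgebra K G ⊗[K] M →ₗ[K] Q := TensorProduct.lift b
  have hF : ∀ (g : G) (m : M),
      F (MonoidAlgebra.single g (1 : K) ⊗ₜ[K] m) = floorQ π 1 (π g m) := by
    intro g m
    show TensorProduct.lift b (MonoidAlgebra.single g (1 : K) ⊗ₜ[K] m) = _
    rw [TensorProduct.lift.tmul]
    change (Finsupp.lsum K fun g => LinearMap.toSpanSingleton K (M →ₗ[K] Q) (L g)) (Finsupp.single g (1 : K)) m = _
    erw [Finsupp.lsum_single]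
    rw [LinearMap.toSpanSingleton_apply, one_smul]
    simp only [L, LinearMap.comp_apply, TensorProduct.mk_apply]
    rfl
  have hker : lamRel K G M π ≤ LinearMap.ker F := by
    refine Submodule.span_le.mpr ?_
    rintro _ ⟨g, h, m, ⟨m0, rfl⟩, rfl⟩
    simp only [SetLike.mem_coe, LinearMap.mem_ker, map_sub, hF]
    rw [hπ3 g h m0]
    exact sub_self _
  refine ⟨(lamRel K G M π).liftQ F hker, ?_, ?_, ?_⟩
  · intro h m
    rw [floorQ, Submodule.liftQ_apply, hF]
  · -- idempotent
    intro u
    set T := (lamRel K G M π).liftQ F hker with hTdef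
    have hT : ∀ (h : G) (m : M), T (floorQ π h m) = floorQ π 1 (π h m) := by
      intro h m; rw [floorQ, hTdef, Submodule.liftQ_apply, hF]
    refine Submodule.span_induction ?_ ?_ ?_ ?_ (floorQ_span π u)
    · rintro _ ⟨g, m, rfl⟩
      rw [hT, hT, hπ1]
    · simp
    · intro x y _ _ hx hy; rw [map_add, map_add, hx, hy]
    · intro c x _ hx; rw [map_smul, map_smul, hx]
  · -- module map
    intro act hact a u
    set T := (lamRel K G M π).liftQ F hker with hTdef
    have hT : ∀ (h : G) (m : M), T (floorQ π h m) = floorQ π 1 (π h m) := by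
      intro h m; rw [floorQ, hTdef, Submodule.liftQ_apply, hF]
    have key : ∀ (g : G) (x : A) (h : G) (m : M),
        T (act (floorQ l g x) (floorQ π h m)) = act (floorQ l g x) (T (floorQ π h m)) := by
      intro g x h m
      rw [hact, hT, hT, hact]
      -- goal : floorQ π 1 (π g (σ x (π (g⁻¹ * h) m))) = floorQ π g (σ x (π (g⁻¹ * 1) (π h m)))
      rw [mul_one]
      set w : M := σ x (π g⁻¹ (π h m)) with hw
      have h2 : π g (π g⁻¹ (π h m)) = π g (π (g⁻¹ * h) m) := by
        have := hπ2 g⁻¹ h m; rwa [inv_inv] at this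
      have hgw : π g (σ x (π (g⁻¹ * h) m)) = π g w := by
        rw [hcov, hcov, ← h2]
      have hww : π g⁻¹ (π g w) = w := by
        have e1 : π g⁻¹ (π g (σ x (π g⁻¹ (π h m))))
            = σ x (π g⁻¹ (π g (π g⁻¹ (π h m)))) := by
          have := heps2 g⁻¹ x (π g⁻¹ (π h m)); rwa [inv_inv] at this
        have e2 : π g⁻¹ (π g (π g⁻¹ (π h m))) = π g⁻¹ (π h m) := by
          rw [hπ3 g⁻¹ g (π h m), inv_mul_cancel, hπ1]
        rw [hw, e1, e2]
      have hmem : w ∈ LinearMap.range (π g⁻¹) := ⟨π g w, hww⟩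
      rw [hgw]
      have := floorQ_eq π 1 g w hmem
      rwa [one_mul] at this
    -- extend by linearity
    refine Submodule.span_induction (p := fun a _ => T (act a u) = act a (T u)) ?_ ?_ ?_ ?_
      (floorQ_span l a)
    · rintro _ ⟨g, x, rfl⟩
      refine Submodule.span_induction (p := fun u _ =>
        T (act (floorQ l g x) u) = act (floorQ l g x) (T u)) ?_ ?_ ?_ ?_ (floorQ_span π u)
      · rintro _ ⟨h, m, rfl⟩; exact key g x h m
      · simp
      · intro v w _ _ hv hw; simp only [map_add, hv, hw]
      · intro c v _ hv; simp only [map_smul, hv]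
    · simp
    · intro v w _ _ hv hw
      simp only [map_add, LinearMap.add_apply, hv, hw]
    · intro c v _ hv
      simp only [map_smul, LinearMap.smul_apply, hv]


end
end
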